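/- arXiv:2011.01239 — 2 statements merged into one kernel-verified Lean document; each statement's English description precedes it below -/
import Mathlib

section
/- Let F be an involution ((-1)^F)² = 1 on a finite-dimensional complex Hilbert space that anticommutes with Q (and hence with Q†), where Q² = 0 and H = QQ† + Q†Q. Then for every eigenvalue E > 0 of H, the restriction of (-1)^F to the E-eigenspace of H has trace zero. -/
/-!
The supercharge `A = Q + Q†` squares to `H` (as `Q² = 0`), so on the `E`-eigenspace of `H` it
restricts to an operator with `A² = E`, invertible because `E ≠ 0`. Since `P` is self-adjoint it
anticommutes with `Q†` as well as `Q`, hence with `A`; so `P = -A P A⁻¹` on the eigenspace, and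
cyclicity of the trace gives `tr P = -tr P`.
-/

open Module Set

theorem LinearMap.trace_eq_zero_of_mul_eq_neg_mul_of_isUnit {R M : Type*} [CommRing R]
    [NoZeroDivisors R] [CharZero R] [AddCommGroup M] [Module R M] {f g : End R M}
    (hg : IsUnit g) (h : f * g = -(g * f)) : trace R M f = 0 := by
  obtain ⟨u, rfl⟩ := hg
  have hconj : (↑u⁻¹ : End R M) * f * u = -f := by
    rw [mul_assoc, h, mul_neg, ← mul_assoc, Units.inv_mul, one_mul]
  rw [← CharZero.eq_neg_self_iff, ← map_neg, ← hconj, trace_mul_cycle, Units.mul_inv, one_mul]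

theorem LinearMap.restrict_mul_eq_neg {R M : Type*} [CommRing R] [AddCommGroup M] [Module R M]
    {f g : End R M} (h : f * g = -(g * f)) {p : Submodule R M} (hf : MapsTo f p p)
    (hg : MapsTo g p p) : f.restrict hf * g.restrict hg = -(g.restrict hg * f.restrict hf) := by
  ext x
  exact congr($h x)

namespace Module.End

variable {R M : Type*} [CommRing R] [AddCommGroup M] [Module R M]

theorem mapsTo_eigenspace_mul_self (A : End R M) (μ : R) :
    MapsTo A (eigenspace (A * A) μ) (eigenspace (A * A) μ) :=
  mapsTo_genEigenspace_of_comm ((Commute.refl A).mul_left (Commute.refl A)) μ 1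

theorem restrict_mul_self_eigenspace_mul_self (A : End R M) (μ : R) :
    A.restrict (mapsTo_eigenspace_mul_self A μ) * A.restrict (mapsTo_eigenspace_mul_self A μ)
      = μ • 1 := by
  ext x
  exact mem_eigenspace_iff.mp x.2

theorem isUnit_restrict_eigenspace_mul_self (A : End R M) {μ : R} (hμ : IsUnit μ) :
    IsUnit (A.restrict (mapsTo_eigenspace_mul_self A μ)) := by
  have hsq := restrict_mul_self_eigenspace_mul_self A μ
  set B := A.restrict (mapsTo_eigenspace_mul_self A μ)
  refine ⟨⟨B, (↑hμ.unit⁻¹ : R) • B, ?_, ?_⟩, rfl⟩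
  · rw [mul_smul_comm, hsq, smul_smul, IsUnit.val_inv_mul, one_smul]
  · rw [smul_mul_assoc, hsq, smul_smul, IsUnit.val_inv_mul, one_smul]

end Module.End

theorem LinearMap.comp_adjoint_eq_neg_of_comp_eq_neg {𝕜 E : Type*} [RCLike 𝕜]
    [NormedAddCommGroup E] [InnerProductSpace 𝕜 E] [FiniteDimensional 𝕜 E]
    {P Q : E →ₗ[𝕜] E} (hP : adjoint P = P) (h : P ∘ₗ Q = -(Q ∘ₗ P)) :
    P ∘ₗ adjoint Q = -(adjoint Q ∘ₗ P) := by
  have := congrArg adjoint h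
  rw [adjoint_comp, map_neg, adjoint_comp, hP] at this
  rw [this, neg_neg]

theorem susy_trace_parity_on_excited_eigenspace_zero_general
    {V : Type*} [NormedAddCommGroup V] [InnerProductSpace ℂ V]
    [FiniteDimensional ℂ V] (Q P : V →ₗ[ℂ] V) (hQ2 : Q ∘ₗ Q = 0)
    (hPsa : LinearMap.adjoint P = P)
    (hPQ : P ∘ₗ Q = -(Q ∘ₗ P))
    (H : V →ₗ[ℂ] V)
    (hH : H = Q ∘ₗ LinearMap.adjoint Q + LinearMap.adjoint Q ∘ₗ Q)
    (E : ℝ) (hE : 0 < E)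
    (hinv : ∀ x ∈ Module.End.eigenspace H (E : ℂ),
      P x ∈ Module.End.eigenspace H (E : ℂ)) :
    LinearMap.trace ℂ (Module.End.eigenspace H (E : ℂ)) (P.restrict hinv) = 0 := by
  set A : End ℂ V := Q + LinearMap.adjoint Q
  have hQ'2 : LinearMap.adjoint Q ∘ₗ LinearMap.adjoint Q = 0 := by
    rw [← LinearMap.adjoint_comp, hQ2, map_zero]
  have hAA : A * A = H := by
    rw [hH]
    simp only [A, add_mul, mul_add, End.mul_eq_comp, hQ2, hQ'2, zero_add, add_comm]
  have hPA : P * A = -(A * P) := by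
    simp only [A, mul_add, add_mul, End.mul_eq_comp, hPQ,
      LinearMap.comp_adjoint_eq_neg_of_comp_eq_neg hPsa hPQ, neg_add]
  subst hAA
  have hEunit : IsUnit (E : ℂ) := (Complex.ofReal_ne_zero.mpr hE.ne').isUnit
  exact LinearMap.trace_eq_zero_of_mul_eq_neg_mul_of_isUnit
    (A.isUnit_restrict_eigenspace_mul_self hEunit)
    (LinearMap.restrict_mul_eq_neg hPA hinv (A.mapsTo_eigenspace_mul_self _))

/-- If P = (-1)^F is a self-adjoint involution anticommuting with Q,
Q² = 0, H = QQ† + Q†Q, then for any eigenvalue E > 0 of H the trace of the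
restriction of P to the E-eigenspace of H vanishes. -/
theorem susy_trace_parity_on_excited_eigenspace_zero
    {V : Type*} [NormedAddCommGroup V] [InnerProductSpace ℂ V]
    [FiniteDimensional ℂ V] (Q P : V →ₗ[ℂ] V) (hQ2 : Q ∘ₗ Q = 0)
    (hP2 : P ∘ₗ P = LinearMap.id) (hPsa : LinearMap.adjoint P = P)
    (hPQ : P ∘ₗ Q = -(Q ∘ₗ P))
    (H : V →ₗ[ℂ] V)
    (hH : H = Q ∘ₗ LinearMap.adjoint Q + LinearMap.adjoint Q ∘ₗ Q)
    (E : ℝ) (hE : 0 < E)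
    (hinv : ∀ x ∈ Module.End.eigenspace H (E : ℂ),
      P x ∈ Module.End.eigenspace H (E : ℂ)) :
    LinearMap.trace ℂ (Module.End.eigenspace H (E : ℂ)) (P.restrict hinv) = 0 :=
  susy_trace_parity_on_excited_eigenspace_zero_general Q P hQ2 hPsa hPQ H hH E hE hinv
end

section
/- Under the assumptions that P = (-1)^F is a self-adjoint involution anticommuting with Q, Q² = 0, and H = QQ† + Q†Q, the trace of P over the whole space equals the trace of the restriction of P to the kernel of H (the Witten index equals Tr (-1)^F). -/
/-!
Put `A = Q + Q†`. Since `Q² = 0`, `A` is a self-adjoint square root of `H`, so `ker H = ker A`,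
and `P` anticommutes with `A`. On `(ker A)ᗮ`, which both `A` and `P` preserve, `A` is invertible,
so conjugating by it turns the restriction of `P` into its negative: that restriction has trace
zero, and the whole trace of `P` comes from `ker H`.
-/

namespace LinearMap

section CommRing

variable {R M : Type*} [CommRing R] [AddCommGroup M] [Module R M]

theorem trace_eq_zero_of_comp_eq_neg_comp [IsAddTorsionFree R] (f : M →ₗ[R] M) (e : M ≃ₗ[R] M)
    (h : e.toLinearMap ∘ₗ f = -(f ∘ₗ e.toLinearMap)) : trace R M f = 0 := by
  have hconj : e.conj f = -f := by
    ext x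
    simp [LinearEquiv.conj_apply, h]
  rw [← neg_eq_self, ← map_neg, ← hconj, trace_conj']

theorem trace_eq_trace_restrict_add_trace_restrict {p q : Submodule R M} (hpq : IsCompl p q)
    [Module.Finite R p] [Module.Free R p] [Module.Finite R q] [Module.Free R q]
    (f : M →ₗ[R] M) (hp : ∀ x ∈ p, f x ∈ p) (hq : ∀ x ∈ q, f x ∈ q) :
    trace R M f = trace R p (f.restrict hp) + trace R q (f.restrict hq) := by
  let N : Bool → Submodule R M := fun b => if b then p else q
  have hN : DirectSum.IsInternal N :=
    (DirectSum.isInternal_submodule_iff_isCompl N (i := true) (j := false) (by decide)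
      (by ext b; cases b <;> simp)).2 hpq
  have : ∀ b, Module.Finite R (N b) := Bool.rec ‹Module.Finite R q› ‹Module.Finite R p›
  have : ∀ b, Module.Free R (N b) := Bool.rec ‹Module.Free R q› ‹Module.Free R p›
  rw [trace_eq_sum_trace_restrict hN (f := f) (Bool.rec (fun x hx => hq x hx) fun x hx => hp x hx),
    Fintype.sum_bool]
  rfl

end CommRing

section InnerProductSpace

variable {𝕜 E : Type*} [RCLike 𝕜] [NormedAddCommGroup E] [InnerProductSpace 𝕜 E]
  [FiniteDimensional 𝕜 E]

theorem IsSymmetric.trace_restrict_orthogonal_ker_eq_zero {T P : E →ₗ[𝕜] E} (hT : T.IsSymmetric)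
    (hPT : P ∘ₗ T = -(T ∘ₗ P)) (hP : ∀ x ∈ (ker T)ᗮ, P x ∈ (ker T)ᗮ) :
    trace 𝕜 (ker T)ᗮ (P.restrict hP) = 0 := by
  have hT' : ∀ x ∈ (ker T)ᗮ, T x ∈ (ker T)ᗮ := fun x hx =>
    hT.orthogonalComplement_mem_invtSubmodule (p := ker T)
      (fun y (hy : T y = 0) => show T (T y) = 0 by rw [hy, map_zero]) hx
  have hinj : Function.Injective (T.restrict hT') := by
    rw [← ker_eq_bot, ker_eq_bot']
    intro x hx
    have hker : (x : E) ∈ ker T ⊓ (ker T)ᗮ := ⟨congrArg Subtype.val hx, x.2⟩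
    rw [Submodule.inf_orthogonal_eq_bot, Submodule.mem_bot] at hker
    exact Subtype.ext hker
  refine trace_eq_zero_of_comp_eq_neg_comp _ (LinearEquiv.ofInjectiveEndo _ hinj) ?_
  ext x
  have hx := congr($hPT x)
  simp only [comp_apply, neg_apply] at hx
  change T (P x) = -P (T x)
  rw [hx, neg_neg]

theorem IsSymmetric.trace_eq_trace_restrict_ker {T P : E →ₗ[𝕜] E} (hT : T.IsSymmetric)
    (hP : P.IsSymmetric) (hPT : P ∘ₗ T = -(T ∘ₗ P)) (hinv : ∀ x ∈ ker T, P x ∈ ker T) :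
    trace 𝕜 E P = trace 𝕜 (ker T) (P.restrict hinv) := by
  have hinv' : ∀ x ∈ (ker T)ᗮ, P x ∈ (ker T)ᗮ := fun x hx =>
    hP.orthogonalComplement_mem_invtSubmodule (p := ker T) (fun y hy => hinv y hy) hx
  rw [trace_eq_trace_restrict_add_trace_restrict (ker T).isCompl_orthogonal P hinv hinv',
    hT.trace_restrict_orthogonal_ker_eq_zero hPT hinv', add_zero]

theorem isSymmetric_add_adjoint (Q : E →ₗ[𝕜] E) : (Q + adjoint Q).IsSymmetric :=
  (isSymmetric_iff_isSelfAdjoint _).2 (IsSelfAdjoint.add_star_self Q)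

theorem add_adjoint_comp_add_adjoint_of_comp_self_eq_zero {Q : E →ₗ[𝕜] E} (hQ : Q ∘ₗ Q = 0) :
    (Q + adjoint Q) ∘ₗ (Q + adjoint Q) = Q ∘ₗ adjoint Q + adjoint Q ∘ₗ Q := by
  have hQ' : adjoint Q ∘ₗ adjoint Q = 0 := by rw [← adjoint_comp, hQ, map_zero]
  simp only [add_comp, comp_add, hQ, hQ']
  abel

theorem ker_comp_adjoint_add_adjoint_comp {Q : E →ₗ[𝕜] E} (hQ : Q ∘ₗ Q = 0) :
    ker (Q ∘ₗ adjoint Q + adjoint Q ∘ₗ Q) = ker (Q + adjoint Q) := by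
  rw [← add_adjoint_comp_add_adjoint_of_comp_self_eq_zero hQ]
  nth_rw 1 [← (isSymmetric_add_adjoint Q).adjoint_eq]
  exact ker_adjoint_comp_self _

theorem comp_add_adjoint_eq_neg_add_adjoint_comp {P Q : E →ₗ[𝕜] E} (hP : adjoint P = P)
    (hPQ : P ∘ₗ Q = -(Q ∘ₗ P)) :
    P ∘ₗ (Q + adjoint Q) = -((Q + adjoint Q) ∘ₗ P) := by
  have hPQ' : P ∘ₗ adjoint Q = -(adjoint Q ∘ₗ P) := by
    rw [← hP, ← adjoint_comp, ← adjoint_comp, hPQ, map_neg, neg_neg]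
  rw [comp_add, add_comp, hPQ, hPQ', neg_add]

end InnerProductSpace

end LinearMap

open LinearMap in
theorem witten_index_equals_trace_parity_general
    {V : Type*} [NormedAddCommGroup V] [InnerProductSpace ℂ V]
    [FiniteDimensional ℂ V] (Q P : V →ₗ[ℂ] V) (hQ2 : Q ∘ₗ Q = 0)
    (hPsa : LinearMap.adjoint P = P)
    (hPQ : P ∘ₗ Q = -(Q ∘ₗ P))
    (H : V →ₗ[ℂ] V)
    (hH : H = Q ∘ₗ LinearMap.adjoint Q + LinearMap.adjoint Q ∘ₗ Q)
    (hinv : ∀ x ∈ LinearMap.ker H, P x ∈ LinearMap.ker H) :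
    LinearMap.trace ℂ V P = LinearMap.trace ℂ (LinearMap.ker H) (P.restrict hinv) := by
  have hP : P.IsSymmetric := (isSymmetric_iff_isSelfAdjoint P).2 (isSelfAdjoint_iff'.2 hPsa)
  generalize hK : ker H = K at hinv ⊢
  rw [hH, ker_comp_adjoint_add_adjoint_comp hQ2] at hK
  subst hK
  exact (isSymmetric_add_adjoint Q).trace_eq_trace_restrict_ker hP
    (comp_add_adjoint_eq_neg_add_adjoint_comp hPsa hPQ) hinv

/-- For P = (-1)^F a self-adjoint involution anticommuting with Q,
Q² = 0 and H = QQ† + Q†Q, the trace of P over the whole space equals the trace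
of the restriction of P to ker H (the Witten index equals Tr (-1)^F). -/
theorem witten_index_equals_trace_parity
    {V : Type*} [NormedAddCommGroup V] [InnerProductSpace ℂ V]
    [FiniteDimensional ℂ V] (Q P : V →ₗ[ℂ] V) (hQ2 : Q ∘ₗ Q = 0)
    (hP2 : P ∘ₗ P = LinearMap.id) (hPsa : LinearMap.adjoint P = P)
    (hPQ : P ∘ₗ Q = -(Q ∘ₗ P))
    (H : V →ₗ[ℂ] V)
    (hH : H = Q ∘ₗ LinearMap.adjoint Q + LinearMap.adjoint Q ∘ₗ Q)
    (hinv : ∀ x ∈ LinearMap.ker H, P x ∈ LinearMap.ker H) :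
    LinearMap.trace ℂ V P = LinearMap.trace ℂ (LinearMap.ker H) (P.restrict hinv) :=
  witten_index_equals_trace_parity_general Q P hQ2 hPsa hPQ H hH hinv
end
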